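/- arXiv:2601.03560 — 2 statements merged into one kernel-verified Lean document; each statement's English description precedes it below -/
import Mathlib

section
/- Let d ≥ 1 and let f be a nonzero harmonic binary d-form. Then f admits no Waring decomposition with fewer than d summands; that is, there do not exist an integer r < d, real numbers λ₁,…,λ_r, and real linear forms L₁,…,L_r with f = Σ_{i=1}^r λᵢ Lᵢ^d. Equivalently, WR(f) ≥ d. -/
open MvPolynomial Finset

/-- The Laplacian `∂x² + ∂y²` applied to a binary polynomial. -/
noncomputable def lap (f : MvPolynomial (Fin 2) ℝ) : MvPolynomial (Fin 2) ℝ :=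
  pderiv 0 (pderiv 0 f) + pderiv 1 (pderiv 1 f)

/-- Apply the constant-coefficient differential operator encoded by the polynomial
`g ∈ ℝ[∂x,∂y]` (with `∂x = X 0`, `∂y = X 1`) to the polynomial `f`. -/
noncomputable def diffOp (g f : MvPolynomial (Fin 2) ℝ) : MvPolynomial (Fin 2) ℝ :=
  (AddMonoidAlgebra.coeff g).sum fun m c =>
    c • ((fun p => pderiv (0 : Fin 2) p)^[m 0] ((fun p => pderiv (1 : Fin 2) p)^[m 1] f))

/-- The harmonic form `h_{d,0} = Σ_j (−1)^j C(d,2j) x^(d−2j) y^(2j)`. -/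
noncomputable def h0 (d : ℕ) : MvPolynomial (Fin 2) ℝ :=
  ∑ j ∈ Finset.range (d / 2 + 1),
    C ((-1 : ℝ) ^ j * (d.choose (2 * j) : ℝ)) * X 0 ^ (d - 2 * j) * X 1 ^ (2 * j)

/-- The harmonic form `h_{d,1} = Σ_j (−1)^j C(d,2j+1) x^(d−2j−1) y^(2j+1)`. -/
noncomputable def h1 (d : ℕ) : MvPolynomial (Fin 2) ℝ :=
  ∑ j ∈ Finset.range ((d - 1) / 2 + 1),
    C ((-1 : ℝ) ^ j * (d.choose (2 * j + 1) : ℝ)) * X 0 ^ (d - (2 * j + 1)) * X 1 ^ (2 * j + 1)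

/-- `f` is a sum of `r` real multiples of `d`-th powers of real linear forms. -/
def IsWaringDecomp (d r : ℕ) (f : MvPolynomial (Fin 2) ℝ) : Prop :=
  ∃ (lam a b : Fin r → ℝ), f = ∑ i, lam i • (C (a i) * X 0 + C (b i) * X 1) ^ d

/-- The (real) Waring rank of `f` as a binary `d`-form: the smallest positive `r`
admitting a Waring decomposition of length `r`. -/
noncomputable def waringRank (d : ℕ) (f : MvPolynomial (Fin 2) ℝ) : ℕ :=
  sInf {r : ℕ | 0 < r ∧ IsWaringDecomp d r f}

/-!
Under the apolar pairing `⟨g, f⟩ = g(∂x, ∂y) f`, the `d`-th power of `L = a x + b y` represents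
evaluation: `⟨g, L^d⟩ = d! g(a, b)`, and multiplication by `x² + y²` is adjoint to `Δ`. So if
`f = ∑ λᵢ Lᵢ^d` is harmonic, then `∑ λᵢ (aᵢ² + bᵢ²) h(aᵢ, bᵢ) = 0` for every form `h` of degree
`d - 2`. With `r < d` summands, taking for `h` a product of linear forms vanishing at all points but
the first shows that the first summand is zero or proportional to another one; either way the
decomposition shortens, and by induction `f = 0`. Every binary `d`-form is a combination of the
`d + 1` powers `(j x + y)^d`, so the set defining the Waring rank is nonempty.
-/

open scoped Nat

noncomputable def linForm (a b : ℝ) : MvPolynomial (Fin 2) ℝ := C a * X 0 + C b * X 1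

/-- The apolar pairing, `⟨g, f⟩ = g(∂x, ∂y) f` when `f` and `g` are forms of the same degree. -/
noncomputable def apolar (g f : MvPolynomial (Fin 2) ℝ) : ℝ :=
  ∑ m ∈ g.support, coeff m g * coeff m f * ((m 0)! * (m 1)!)

theorem apolar_eq_sum_of_support_subset {g : MvPolynomial (Fin 2) ℝ} {S : Finset (Fin 2 →₀ ℕ)}
    (hS : g.support ⊆ S) (f : MvPolynomial (Fin 2) ℝ) :
    apolar g f = ∑ m ∈ S, coeff m g * coeff m f * ((m 0)! * (m 1)!) :=
  sum_subset hS fun m _ hm => by rw [notMem_support_iff.mp hm, zero_mul, zero_mul]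

theorem apolar_add_left (g g' f : MvPolynomial (Fin 2) ℝ) :
    apolar (g + g') f = apolar g f + apolar g' f := by
  classical
  rw [apolar_eq_sum_of_support_subset support_add,
    apolar_eq_sum_of_support_subset (subset_union_left (s₂ := g'.support)),
    apolar_eq_sum_of_support_subset (subset_union_right (s₁ := g.support)), ← sum_add_distrib]
  simp only [coeff_add, add_mul]

theorem apolar_monomial_left (μ : Fin 2 →₀ ℕ) (c : ℝ) (f : MvPolynomial (Fin 2) ℝ) :
    apolar (monomial μ c) f = c * coeff μ f * ((μ 0)! * (μ 1)!) := by
  classical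
  rw [apolar_eq_sum_of_support_subset support_monomial_subset, sum_singleton, coeff_monomial,
    if_pos rfl]

theorem apolar_sum_right {ι : Type*} (g : MvPolynomial (Fin 2) ℝ) (s : Finset ι)
    (F : ι → MvPolynomial (Fin 2) ℝ) :
    apolar g (∑ i ∈ s, F i) = ∑ i ∈ s, apolar g (F i) := by
  simp only [apolar, coeff_sum, mul_sum, sum_mul]
  exact sum_comm

theorem apolar_smul_right (g f : MvPolynomial (Fin 2) ℝ) (c : ℝ) :
    apolar g (c • f) = c * apolar g f := by
  simp only [apolar, coeff_smul, smul_eq_mul, mul_sum]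
  exact sum_congr rfl fun _ _ => by ring

theorem apolar_zero_right (g : MvPolynomial (Fin 2) ℝ) : apolar g 0 = 0 := by
  simp [apolar]

theorem coeff_lap (μ : Fin 2 →₀ ℕ) (f : MvPolynomial (Fin 2) ℝ) :
    coeff μ (lap f) = coeff (μ + Finsupp.single 0 2) f * ((μ 0 + 1) * (μ 0 + 2))
      + coeff (μ + Finsupp.single 1 2) f * ((μ 1 + 1) * (μ 1 + 2)) := by
  simp only [lap, coeff_add, coeff_pderiv, add_assoc, ← Finsupp.single_add, Finsupp.add_apply,
    Finsupp.single_eq_same]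
  push_cast
  ring

theorem apolar_sumSq_mul (h f : MvPolynomial (Fin 2) ℝ) :
    apolar ((X 0 ^ 2 + X 1 ^ 2) * h) f = apolar h (lap f) := by
  induction h using MvPolynomial.induction_on' with
  | add p q hp hq => rw [mul_add, apolar_add_left, apolar_add_left, hp, hq]
  | monomial μ c =>
    rw [add_mul, X_pow_eq_monomial, X_pow_eq_monomial, monomial_mul, monomial_mul,
      apolar_add_left, apolar_monomial_left, apolar_monomial_left, apolar_monomial_left,
      coeff_lap, add_comm _ μ, add_comm _ μ]
    simp only [Finsupp.add_apply, Finsupp.single_apply, Fin.isValue, ↓reduceIte, add_zero,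
      one_ne_zero, zero_ne_one, Nat.factorial_succ]
    push_cast
    ring

theorem Finsupp.single_zero_add_single_one_sub {m : Fin 2 →₀ ℕ} {d : ℕ} (hm : m 0 + m 1 = d) :
    single 0 (m 0) + single 1 (d - m 0) = m := by
  ext i; fin_cases i <;> simp [← hm]

theorem MvPolynomial.IsHomogeneous.apply_zero_add_apply_one {R : Type*} [CommSemiring R]
    {g : MvPolynomial (Fin 2) R} {d : ℕ}
    (hg : g.IsHomogeneous d) {m : Fin 2 →₀ ℕ} (hm : coeff m g ≠ 0) : m 0 + m 1 = d := by
  by_contra h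
  exact hm (hg.coeff_eq_zero (by rwa [Finsupp.degree_eq_sum, Fin.sum_univ_two]))

theorem isHomogeneous_linForm (a b : ℝ) : (linForm a b).IsHomogeneous 1 :=
  (isHomogeneous_C_mul_X a 0).add (isHomogeneous_C_mul_X b 1)

theorem eval_linForm (a b : ℝ) (p : Fin 2 → ℝ) : eval p (linForm a b) = a * p 0 + b * p 1 := by
  simp [linForm]

theorem coeff_linForm_pow (a b : ℝ) {d : ℕ} {m : Fin 2 →₀ ℕ} (hm : m 0 + m 1 = d) :
    coeff m (linForm a b ^ d) = d.choose (m 0) * a ^ m 0 * b ^ m 1 := by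
  classical
  have hterm : ∀ k,
      (C a * X 0) ^ k * (C b * X 1) ^ (d - k) * (d.choose k : MvPolynomial (Fin 2) ℝ) =
      monomial (Finsupp.single 0 k + Finsupp.single 1 (d - k))
        (d.choose k * a ^ k * b ^ (d - k)) := by
    intro k
    rw [mul_pow, mul_pow, ← C_pow, ← C_pow, C_mul_X_pow_eq_monomial, C_mul_X_pow_eq_monomial,
      monomial_mul, ← map_natCast C, mul_comm, C_mul_monomial]
    ring_nf
  rw [linForm, add_pow, coeff_sum, sum_eq_single (m 0)]
  · rw [hterm, coeff_monomial, if_pos (Finsupp.single_zero_add_single_one_sub hm), ← hm,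
      Nat.add_sub_cancel_left]
  · intro k _ hk
    rw [hterm, coeff_monomial, if_neg fun h => hk (by simpa using congrArg (· 0) h)]
  · exact fun h => absurd (mem_range.2 (by omega)) h

theorem apolar_linForm_pow {g : MvPolynomial (Fin 2) ℝ} {d : ℕ} (hg : g.IsHomogeneous d)
    (a b : ℝ) : apolar g (linForm a b ^ d) = d ! * eval ![a, b] g := by
  rw [apolar, eval_eq', mul_sum]
  refine sum_congr rfl fun m hm => ?_
  have hmd := hg.apply_zero_add_apply_one (mem_support_iff.mp hm)
  rw [coeff_linForm_pow a b hmd, Fin.prod_univ_two, ← hmd,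
    ← Nat.choose_mul_factorial_mul_factorial (Nat.le_add_right (m 0) (m 1)),
    Nat.add_sub_cancel_left]
  simp only [Matrix.cons_val_zero, Matrix.cons_val_one]
  push_cast
  ring

theorem isWaringDecomp_succ_of_isHomogeneous {d : ℕ} {f : MvPolynomial (Fin 2) ℝ}
    (hf : f.IsHomogeneous d) : IsWaringDecomp d (d + 1) f := by
  classical
  -- `(j x + y)^d` has `x^k y^(d-k)`-coefficient `C(d,k) j^k`: matching coefficients with `f` is
  -- a Vandermonde system in the nodes `j = 0, …, d`.
  set t : Fin (d + 1) → ℝ := fun j => (j : ℝ)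
  have hV : IsUnit (Matrix.vandermonde t) := by
    rw [Matrix.isUnit_iff_isUnit_det, isUnit_iff_ne_zero, Matrix.det_vandermonde_ne_zero_iff]
    intro i j h
    exact Fin.ext (by simpa [t] using h)
  obtain ⟨c, hc⟩ := Matrix.vecMul_surjective_iff_isUnit.2 hV
    fun k : Fin (d + 1) =>
      coeff (Finsupp.single 0 (k : ℕ) + Finsupp.single 1 (d - k)) f / d.choose k
  refine ⟨c, t, fun _ => 1, ?_⟩
  change f = ∑ i, c i • linForm (t i) 1 ^ d
  ext m
  simp only [coeff_sum, coeff_smul, smul_eq_mul]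
  by_cases hm : m 0 + m 1 = d
  · have hk := congrFun hc ⟨m 0, by omega⟩
    simp only [Matrix.vecMul, dotProduct, Matrix.vandermonde_apply,
      Finsupp.single_zero_add_single_one_sub hm] at hk
    have hchoose : (d.choose (m 0) : ℝ) ≠ 0 := by exact_mod_cast (Nat.choose_pos (by omega)).ne'
    simp_rw [coeff_linForm_pow _ _ hm, one_pow, mul_one, mul_left_comm _ (d.choose (m 0) : ℝ),
      ← mul_sum, hk, mul_div_cancel₀ _ hchoose]
  · have hdeg : m.degree ≠ d := by rwa [Finsupp.degree_eq_sum, Fin.sum_univ_two]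
    rw [hf.coeff_eq_zero hdeg]
    exact (sum_eq_zero fun i _ => by
      rw [((isHomogeneous_linForm _ _).pow d).coeff_eq_zero (by rwa [one_mul]), mul_zero]).symm

theorem apolar_sum_smul_linForm_pow {g : MvPolynomial (Fin 2) ℝ} {d : ℕ} (hg : g.IsHomogeneous d)
    {r : ℕ} (lam a b : Fin r → ℝ) :
    apolar g (∑ i, lam i • linForm (a i) (b i) ^ d) = d ! * ∑ i, lam i * eval ![a i, b i] g := by
  simp only [apolar_sum_right, apolar_smul_right, apolar_linForm_pow hg, mul_sum]
  exact sum_congr rfl fun _ _ => mul_left_comm _ _ _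

theorem sum_mul_eval_eq_zero_of_lap_eq_zero {d r : ℕ} {lam a b : Fin r → ℝ}
    (hlap : lap (∑ i, lam i • linForm (a i) (b i) ^ d) = 0) (hd : 2 ≤ d)
    {h : MvPolynomial (Fin 2) ℝ} (hh : h.IsHomogeneous (d - 2)) :
    ∑ i, lam i * eval ![a i, b i] ((X 0 ^ 2 + X 1 ^ 2) * h) = 0 := by
  have hg : ((X 0 ^ 2 + X 1 ^ 2) * h).IsHomogeneous d := by
    have := ((isHomogeneous_X_pow (0 : Fin 2) 2).add (isHomogeneous_X_pow 1 2)).mul hh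
    rwa [Nat.add_sub_cancel' hd] at this
  have hpair := apolar_sum_smul_linForm_pow hg lam a b
  rw [apolar_sumSq_mul, hlap, apolar_zero_right] at hpair
  exact (mul_eq_zero.1 hpair.symm).resolve_left (by positivity)

theorem isWaringDecomp_of_smul_pow_eq_zero {d r : ℕ} {lam a b : Fin (r + 1) → ℝ} (k : Fin (r + 1))
    (hk : lam k • linForm (a k) (b k) ^ d = 0) :
    IsWaringDecomp d r (∑ i, lam i • linForm (a i) (b i) ^ d) :=
  ⟨lam ∘ k.succAbove, a ∘ k.succAbove, b ∘ k.succAbove, by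
    rw [Fin.sum_univ_succAbove _ k, hk, zero_add]; rfl⟩

theorem isWaringDecomp_of_smul_pow_eq_smul_pow {d r : ℕ} {lam a b : Fin (r + 1) → ℝ}
    {j k : Fin (r + 1)} (hjk : j ≠ k) {c : ℝ}
    (hk : lam k • linForm (a k) (b k) ^ d = c • linForm (a j) (b j) ^ d) :
    IsWaringDecomp d r (∑ i, lam i • linForm (a i) (b i) ^ d) := by
  classical
  obtain ⟨j, rfl⟩ := Fin.exists_succAbove_eq hjk
  refine ⟨fun i => lam (k.succAbove i) + if i = j then c else 0, a ∘ k.succAbove,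
    b ∘ k.succAbove, ?_⟩
  rw [Fin.sum_univ_succAbove _ k, hk]
  simp only [add_smul, sum_add_distrib, ite_smul, zero_smul, sum_ite_eq', mem_univ, if_true]
  exact add_comm _ _

theorem exists_eq_mul_of_mul_sub_mul_eq_zero {K : Type*} [Field K] {a b a' b' : K}
    (h' : ¬(a' = 0 ∧ b' = 0)) (h : a * b' - b * a' = 0) : ∃ t, a = t * a' ∧ b = t * b' := by
  by_cases ha' : a' = 0
  · have hb' : b' ≠ 0 := fun hb' => h' ⟨ha', hb'⟩
    refine ⟨b / b', ?_, (div_mul_cancel₀ b hb').symm⟩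
    rw [ha', mul_zero, sub_zero] at h
    rw [ha', mul_zero, (mul_eq_zero.1 h).resolve_right hb']
  · refine ⟨a / a', (div_mul_cancel₀ a ha').symm, ?_⟩
    field_simp
    linear_combination -h

theorem isWaringDecomp_of_mul_sub_mul_eq_zero {d r : ℕ} {lam a b : Fin (r + 1) → ℝ}
    {j k : Fin (r + 1)} (hjk : j ≠ k) (hj : ¬(a j = 0 ∧ b j = 0))
    (h : a k * b j - b k * a j = 0) :
    IsWaringDecomp d r (∑ i, lam i • linForm (a i) (b i) ^ d) := by
  obtain ⟨t, ha, hb⟩ := exists_eq_mul_of_mul_sub_mul_eq_zero hj h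
  refine isWaringDecomp_of_smul_pow_eq_smul_pow hjk (c := lam k * t ^ d) ?_
  have hL : linForm (a k) (b k) = C t * linForm (a j) (b j) := by
    rw [linForm, linForm, ha, hb, map_mul, map_mul]
    ring
  rw [hL, mul_pow, ← map_pow, ← smul_eq_C_mul, smul_smul]

theorem isWaringDecomp_of_succ_of_lap_eq_zero {d r : ℕ} {f : MvPolynomial (Fin 2) ℝ}
    (hlap : lap f = 0) (hr : r + 1 < d) (hf : IsWaringDecomp d (r + 1) f) :
    IsWaringDecomp d r f := by
  obtain ⟨lam, a, b, rfl⟩ := hf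
  change lap (∑ i, lam i • linForm (a i) (b i) ^ d) = 0 at hlap
  change IsWaringDecomp d r (∑ i, lam i • linForm (a i) (b i) ^ d)
  -- `h` vanishes at `(a j, b j)` for `j ≠ 0`, and at `(a 0, b 0)` only if that point is zero or
  -- proportional to one of the others.
  set h := (∏ j : Fin r, linForm (b j.succ) (-a j.succ)) * linForm (a 0) (b 0) ^ (d - 2 - r)
  have hh : h.IsHomogeneous (d - 2) := by
    have := (IsHomogeneous.prod univ (fun j : Fin r => linForm (b j.succ) (-a j.succ))
      (fun _ => 1) fun j _ => isHomogeneous_linForm _ _).mul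
        ((isHomogeneous_linForm (a 0) (b 0)).pow (d - 2 - r))
    rwa [sum_const, card_univ, Fintype.card_fin, smul_eq_mul, mul_one, one_mul,
      Nat.add_sub_cancel' (by omega)] at this
  have heval : ∀ i, eval ![a i, b i] ((X 0 ^ 2 + X 1 ^ 2) * h) = (a i ^ 2 + b i ^ 2) *
      ((∏ j : Fin r, (b j.succ * a i - a j.succ * b i)) *
        (a 0 * a i + b 0 * b i) ^ (d - 2 - r)) := by
    intro i
    simp [h, eval_linForm, sub_eq_add_neg]
  have key := sum_mul_eval_eq_zero_of_lap_eq_zero hlap (by omega) hh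
  rw [Fin.sum_univ_succ, sum_eq_zero fun j _ => ?_, add_zero, heval] at key
  swap
  · rw [heval, prod_eq_zero (mem_univ j) (by ring), zero_mul, mul_zero, mul_zero]
  by_cases hp0 : a 0 = 0 ∧ b 0 = 0
  · refine isWaringDecomp_of_smul_pow_eq_zero 0 ?_
    rw [hp0.1, hp0.2, linForm, map_zero, zero_mul, zero_mul, add_zero, zero_pow (by omega),
      smul_zero]
  have hq : a 0 * a 0 + b 0 * b 0 ≠ 0 := fun hzero => hp0 (mul_self_add_mul_self_eq_zero.1 hzero)
  simp only [sq, mul_eq_zero, prod_eq_zero_iff, pow_eq_zero_iff', mem_univ, true_and] at key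
  rcases key with hlam | hq' | ⟨j, hj⟩ | ⟨hq', -⟩
  · exact isWaringDecomp_of_smul_pow_eq_zero 0 (by rw [hlam, zero_smul])
  · exact absurd hq' hq
  · exact isWaringDecomp_of_mul_sub_mul_eq_zero (Fin.succ_ne_zero j).symm hp0
      (by linear_combination -hj)
  · exact absurd hq' hq

theorem eq_zero_of_isWaringDecomp_of_lap_eq_zero {d : ℕ} {f : MvPolynomial (Fin 2) ℝ}
    (hlap : lap f = 0) : ∀ {r : ℕ}, r < d → IsWaringDecomp d r f → f = 0
  | 0, _, ⟨_, _, _, hf⟩ => by simpa using hf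
  | _ + 1, hr, hf => eq_zero_of_isWaringDecomp_of_lap_eq_zero hlap (by omega)
      (isWaringDecomp_of_succ_of_lap_eq_zero hlap hr hf)

theorem harmonic_waring_rank_lower_bound_general
    (d : ℕ) (f : MvPolynomial (Fin 2) ℝ)
    (hf : f.IsHomogeneous d) (hf0 : f ≠ 0) (hharm : lap f = 0) :
    (¬ ∃ r : ℕ, r < d ∧ IsWaringDecomp d r f) ∧ d ≤ waringRank d f := by
  have hrank : ∀ r, IsWaringDecomp d r f → d ≤ r := fun r hr =>
    not_lt.1 fun hrd => hf0 (eq_zero_of_isWaringDecomp_of_lap_eq_zero hharm hrd hr)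
  refine ⟨fun ⟨r, hrd, hr⟩ => (hrank r hr).not_gt hrd, ?_⟩
  exact le_csInf ⟨d + 1, d.succ_pos, isWaringDecomp_succ_of_isHomogeneous hf⟩
    fun r hr => hrank r hr.2

/-- a nonzero harmonic binary `d`-form admits no Waring decomposition with
fewer than `d` summands; equivalently its Waring rank is at least `d`. -/
theorem harmonic_waring_rank_lower_bound
    (d : ℕ) (hd : 0 < d) (f : MvPolynomial (Fin 2) ℝ)
    (hf : f.IsHomogeneous d) (hf0 : f ≠ 0) (hharm : lap f = 0) :
    (¬ ∃ r : ℕ, r < d ∧ IsWaringDecomp d r f) ∧ d ≤ waringRank d f :=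
  harmonic_waring_rank_lower_bound_general d f hf hf0 hharm
end

section
/- Every nonzero harmonic binary d-form has only real roots; that is, if f is a nonzero homogeneous polynomial of degree d in ℝ[x,y] with Δ ∘ f = 0, then f factors over ℝ as a product of a nonzero constant and d real linear forms. -/
open MvPolynomial Finset

/-!
Over `ℂ` put `u = x + i y` and `v = x - i y`. Both `u ^ d` and `v ^ d` are harmonic, and a
harmonic `d`-form is determined by its coefficients of `x ^ d` and `x ^ (d - 1) y`, because
`Δ f = 0` is a two-step recursion on the coefficients of `x ^ (d - j) y ^ j`. Hence a real harmonic
`d`-form is `A u ^ d + conj A v ^ d = A (u ^ d - γ v ^ d)` with `‖γ‖ = 1`. Splitting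
`u ^ d - γ v ^ d` over the `d`-th roots `w` of `γ`, each factor `u - w v` is a complex multiple of
a real linear form, since `‖w‖ = 1`; the constant in front is then real because `f` is.
-/

open Complex ComplexConjugate

lemma Finsupp.eq_single_zero_add_single_one {M : Type*} [AddCommMonoid M] (m : Fin 2 →₀ M) :
    m = single 0 (m 0) + single 1 (m 1) := by
  ext k; fin_cases k <;> simp

lemma Finsupp.degree_fin_two {M : Type*} [AddCommMonoid M] (m : Fin 2 →₀ M) :
    m.degree = m 0 + m 1 := by
  simp [degree_eq_sum, Fin.sum_univ_two]

namespace MvPolynomial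

variable {R : Type*} [CommSemiring R]

lemma IsHomogeneous.eval_one_zero {p : MvPolynomial (Fin 2) R} {d : ℕ}
    (hp : p.IsHomogeneous d) : eval ![1, 0] p = coeff (Finsupp.single 0 d) p := by
  rw [eval_eq', Finset.sum_eq_single (Finsupp.single 0 d)]
  · simp
  · intro m hm hne
    have hdeg : m 0 + m 1 = d := by
      by_contra h
      exact mem_support_iff.mp hm (hp.coeff_eq_zero (by rwa [Finsupp.degree_fin_two]))
    have hm1 : m 1 ≠ 0 := fun h => hne <| by
      rw [m.eq_single_zero_add_single_one, h, ← hdeg]; simp [h]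
    simp [Fin.prod_univ_two, zero_pow hm1]
  · intro h; simp [notMem_support_iff.mp h]

lemma eval_one_zero_map {S : Type*} [CommSemiring S] (φ : R →+* S) (p : MvPolynomial (Fin 2) R) :
    eval ![1, 0] (map φ p) = φ (eval ![1, 0] p) := by
  rw [map_eval, show (φ ∘ ![1, 0] : Fin 2 → S) = ![1, 0] by ext k; fin_cases k <;> simp]

lemma isHomogeneous_linearForm_pow (t : R) (n : ℕ) :
    ((X 0 + C t * X 1 : MvPolynomial (Fin 2) R) ^ n).IsHomogeneous n := by
  simpa using ((isHomogeneous_X R 0).add (isHomogeneous_C_mul_X t 1)).pow n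

lemma eval_one_zero_linearForm_pow (t : R) (n : ℕ) :
    eval ![1, 0] ((X 0 + C t * X 1 : MvPolynomial (Fin 2) R) ^ n) = 1 := by
  simp

lemma eval_one_zero_pderiv_linearForm_pow (t : R) (n : ℕ) :
    eval ![1, 0] (pderiv 1 ((X 0 + C t * X 1 : MvPolynomial (Fin 2) R) ^ n)) = n * t := by
  simp

end MvPolynomial

noncomputable def laplacian (R : Type*) [CommSemiring R] :
    MvPolynomial (Fin 2) R →ₗ[R] MvPolynomial (Fin 2) R :=
  (pderiv 0).toLinearMap ∘ₗ (pderiv 0).toLinearMap +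
    (pderiv 1).toLinearMap ∘ₗ (pderiv 1).toLinearMap

section Laplacian

variable {R : Type*} [CommSemiring R]

lemma laplacian_apply (g : MvPolynomial (Fin 2) R) :
    laplacian R g = pderiv 0 (pderiv 0 g) + pderiv 1 (pderiv 1 g) := rfl

lemma lap_eq_laplacian (f : MvPolynomial (Fin 2) ℝ) : lap f = laplacian ℝ f := rfl

lemma laplacian_C_mul (a : R) (g : MvPolynomial (Fin 2) R) :
    laplacian R (C a * g) = C a * laplacian R g := by
  rw [C_mul', map_smul, C_mul']

lemma laplacian_map {S : Type*} [CommSemiring S] (φ : R →+* S) (g : MvPolynomial (Fin 2) R) :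
    laplacian S (map φ g) = map φ (laplacian R g) := by
  simp only [laplacian_apply, map_add, pderiv_map]

lemma coeff_laplacian (g : MvPolynomial (Fin 2) R) (i j : ℕ) :
    coeff (Finsupp.single 0 i + Finsupp.single 1 j) (laplacian R g) =
      coeff (Finsupp.single 0 (i + 2) + Finsupp.single 1 j) g * ((i + 1) * (i + 2)) +
        coeff (Finsupp.single 0 i + Finsupp.single 1 (j + 2)) g * ((j + 1) * (j + 2)) := by
  have h0 : Finsupp.single (0 : Fin 2) i + Finsupp.single 1 j + Finsupp.single 0 1 +
      Finsupp.single 0 1 = Finsupp.single 0 (i + 2) + Finsupp.single 1 j := by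
    ext k; fin_cases k <;> simp
  have h1 : Finsupp.single (0 : Fin 2) i + Finsupp.single 1 j + Finsupp.single 1 1 +
      Finsupp.single 1 1 = Finsupp.single 0 i + Finsupp.single 1 (j + 2) := by
    ext k; fin_cases k <;> simp
  simp only [laplacian_apply, coeff_add, coeff_pderiv, h0, h1, Finsupp.add_apply,
    Finsupp.single_eq_same, Finsupp.single_eq_of_ne zero_ne_one,
    Finsupp.single_eq_of_ne one_ne_zero, add_zero, zero_add]
  push_cast
  ring

end Laplacian

lemma laplacian_linearForm_pow {R : Type*} [CommRing R] (t : R) (ht : t ^ 2 = -1) (n : ℕ) :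
    laplacian R ((X 0 + C t * X 1) ^ n) = 0 := by
  have h0 : pderiv (0 : Fin 2) (X 0 + C t * X 1 : MvPolynomial (Fin 2) R) = 1 := by simp
  have h1 : pderiv (1 : Fin 2) (X 0 + C t * X 1 : MvPolynomial (Fin 2) R) = C t := by simp
  have hC : (C t : MvPolynomial (Fin 2) R) * C t = -1 := by rw [← C_mul, ← sq, ht, C_neg, C_1]
  simp only [laplacian_apply, pderiv_pow, pderiv_mul, h0, h1, Derivation.map_natCast, pderiv_C,
    pderiv_one]
  linear_combination (↑n * ↑(n - 1) * (X 0 + C t * X 1) ^ (n - 1 - 1)) * hC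

lemma eq_zero_of_laplacian_eq_zero {K : Type*} [Field K] [CharZero K]
    {g : MvPolynomial (Fin 2) K} {d : ℕ} (hg : g.IsHomogeneous d) (hΔ : laplacian K g = 0)
    (h0 : eval ![1, 0] g = 0) (h1 : eval ![1, 0] (pderiv 1 g) = 0) : g = 0 := by
  have hcoeff : ∀ j ≤ d, coeff (Finsupp.single 0 (d - j) + Finsupp.single 1 j) g = 0 := by
    intro j
    induction j using Nat.twoStepInduction with
    | zero => simpa [hg.eval_one_zero] using h0
    | one =>
      intro _
      rw [hg.pderiv.eval_one_zero, coeff_pderiv] at h1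
      simpa using h1
    | more j ih _ =>
      intro hj
      have h := congr(coeff (Finsupp.single 0 (d - (j + 2)) + Finsupp.single 1 j) $hΔ)
      rw [coeff_laplacian, show d - (j + 2) + 2 = d - j by omega, ih (by omega), coeff_zero,
        zero_mul, zero_add] at h
      exact (mul_eq_zero.mp h).resolve_right
        (by exact_mod_cast (by positivity : (j + 1) * (j + 2) ≠ 0))
  ext m
  by_cases hm : m 0 + m 1 = d
  · rw [m.eq_single_zero_add_single_one, show m 0 = d - m 1 by omega, hcoeff _ (by omega),
      coeff_zero]
  · exact hg.coeff_eq_zero (by rwa [Finsupp.degree_fin_two])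

lemma exists_map_eq_of_lap_eq_zero {d : ℕ} (hd : 0 < d) {f : MvPolynomial (Fin 2) ℝ}
    (hf : f.IsHomogeneous d) (hΔ : lap f = 0) :
    ∃ A : ℂ, map (algebraMap ℝ ℂ) f =
      C A * (X 0 + C I * X 1) ^ d + C (conj A) * (X 0 + C (-I) * X 1) ^ d := by
  set a := eval ![1, 0] f
  set b := eval ![1, 0] (pderiv 1 f)
  -- `A + conj A = a` and `d * I * (A - conj A) = b` are the values at `(1, 0)` of `f` and `∂f/∂y`.
  set A : ℂ := (a - I * b / d) / 2
  have hA : conj A = (a + I * b / d) / 2 := by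
    simp only [A, map_div₀, map_sub, map_mul, conj_ofReal, conj_I, map_natCast, map_ofNat]
    ring
  refine ⟨A, sub_eq_zero.mp (eq_zero_of_laplacian_eq_zero (d := d) ?_ ?_ ?_ ?_)⟩
  · exact (hf.map _).sub (((isHomogeneous_linearForm_pow I d).C_mul A).add
      ((isHomogeneous_linearForm_pow (-I) d).C_mul _))
  · rw [map_sub, map_add, laplacian_map, ← lap_eq_laplacian, hΔ, laplacian_C_mul,
      laplacian_C_mul, laplacian_linearForm_pow I I_sq, laplacian_linearForm_pow (-I) (by simp)]
    simp
  · simp only [map_sub, map_add, eval_mul, eval_C, eval_one_zero_map,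
      eval_one_zero_linearForm_pow, hA, coe_algebraMap]
    ring
  · have hd' : (d : ℂ) ≠ 0 := by exact_mod_cast hd.ne'
    simp only [map_sub, map_add, pderiv_map, pderiv_C_mul, eval_mul, eval_C, eval_one_zero_map,
      eval_one_zero_pderiv_linearForm_pow, hA, coe_algebraMap]
    linear_combination (b : ℂ) * I_sq + (b * I ^ 2 : ℂ) * mul_inv_cancel₀ hd'

namespace Complex

lemma exists_pow_sub_mul_pow_eq_prod {d : ℕ} (hd : 0 < d) (γ : ℂ) :
    ∃ w : Fin d → ℂ, (∀ k, w k ^ d = γ) ∧ ∀ x y : ℂ, x ^ d - γ * y ^ d = ∏ k, (x - w k * y) := by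
  have hζ := isPrimitiveRoot_exp d hd.ne'
  have hα := cpow_nat_inv_pow γ hd.ne'
  refine ⟨fun k => exp (2 * Real.pi * I / d) ^ (k : ℕ) * γ ^ (d⁻¹ : ℂ), fun k => ?_, fun x y => ?_⟩
  · rw [mul_pow, ← pow_mul, mul_comm (k : ℕ), pow_mul, hζ.pow_eq_one, one_pow, one_mul, hα]
  have hroots := X_pow_sub_C_eq_prod hζ hd hα
  rw [← Fin.prod_univ_eq_prod_range] at hroots
  rcases eq_or_ne y 0 with rfl | hy
  · simp [zero_pow hd.ne']
  have hxy := congr(Polynomial.eval (x / y) $hroots)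
  simp only [Polynomial.eval_sub, Polynomial.eval_pow, Polynomial.eval_X, Polynomial.eval_C,
    Polynomial.eval_prod] at hxy
  calc x ^ d - γ * y ^ d = ((x / y) ^ d - γ) * ∏ _k : Fin d, y := by
        rw [Finset.prod_const, Finset.card_fin, div_pow]; field_simp
    _ = ∏ k : Fin d, (x - exp (2 * Real.pi * I / d) ^ (k : ℕ) * γ ^ (d⁻¹ : ℂ) * y) := by
        rw [hxy, ← Finset.prod_mul_distrib]
        refine Finset.prod_congr rfl fun k _ => ?_
        field_simp

lemma exp_arg_div_two_mul_I_sq {w : ℂ} (hw : ‖w‖ = 1) : exp (↑(arg w / 2) * I) ^ 2 = w := by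
  rw [← exp_nat_mul]
  nth_rw 2 [← norm_mul_exp_arg_mul_I w]
  rw [hw, ofReal_one, one_mul]
  congr 1
  push_cast
  ring

lemma add_I_mul_sub_exp_sq_mul (θ : ℝ) (x y : ℂ) :
    x + I * y - exp (θ * I) ^ 2 * (x - I * y) =
      2 * I * exp (θ * I) * (↑(-Real.sin θ) * x + ↑(Real.cos θ) * y) := by
  rw [exp_mul_I]
  push_cast
  linear_combination (-(x + I * y)) * sin_sq_add_cos_sq (θ : ℂ) + ((x + I * y) * sin θ ^ 2) * I_sq

lemma exists_mul_add_conj_mul_eq_prod (A : ℂ) {d : ℕ} (hd : 0 < d) :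
    ∃ (c : ℂ) (θ : Fin d → ℝ), ∀ x y : ℂ, A * (x + I * y) ^ d + conj A * (x - I * y) ^ d =
      c * ∏ k, (↑(-Real.sin (θ k)) * x + ↑(Real.cos (θ k)) * y) := by
  rcases eq_or_ne A 0 with rfl | hA
  · exact ⟨0, 0, by simp⟩
  obtain ⟨w, hw, hprod⟩ := exists_pow_sub_mul_pow_eq_prod hd (-conj A / A)
  have hw1 (k : Fin d) : ‖w k‖ = 1 := by
    have h := congr(‖$(hw k)‖)
    rw [norm_pow, norm_div, norm_neg, norm_conj, div_self (norm_ne_zero_iff.mpr hA)] at h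
    exact (pow_eq_one_iff_of_nonneg (norm_nonneg _) hd.ne').mp h
  refine ⟨A * ∏ k, 2 * I * exp (↑(arg (w k) / 2) * I), fun k => arg (w k) / 2, fun x y => ?_⟩
  calc A * (x + I * y) ^ d + conj A * (x - I * y) ^ d
      = A * ((x + I * y) ^ d - (-conj A / A) * (x - I * y) ^ d) := by field_simp; ring
    _ = A * ∏ k, (x + I * y - w k * (x - I * y)) := by rw [hprod]
    _ = _ := by
      rw [mul_assoc, ← Finset.prod_mul_distrib]
      congr 1
      refine Finset.prod_congr rfl fun k _ => ?_
      rw [← add_I_mul_sub_exp_sq_mul, exp_arg_div_two_mul_I_sq (hw1 k)]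

end Complex

lemma exists_eq_C_mul_of_map_eq_C_mul {σ : Type*} {p q : MvPolynomial σ ℝ} {c : ℂ} (hp : p ≠ 0)
    (h : map (algebraMap ℝ ℂ) p = C c * map (algebraMap ℝ ℂ) q) :
    ∃ r : ℝ, r ≠ 0 ∧ p = C r * q := by
  obtain ⟨m, hm⟩ := exists_coeff_ne_zero hp
  have hcoeff : ((coeff m p : ℝ) : ℂ) = c * (coeff m q : ℝ) := by
    simpa [coeff_map] using congr(coeff m $h)
  have hq : coeff m q ≠ 0 := by
    rintro hq
    rw [hq, ofReal_zero, mul_zero, ofReal_eq_zero] at hcoeff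
    exact hm hcoeff
  have hc : c = ↑(coeff m p / coeff m q) := by
    rw [ofReal_div, hcoeff, mul_div_cancel_right₀ _ (ofReal_ne_zero.mpr hq)]
  refine ⟨coeff m p / coeff m q, div_ne_zero hm hq, map_injective _ (algebraMap ℝ ℂ).injective ?_⟩
  rw [h, hc, map_mul, map_C]
  rfl

/-- a nonzero harmonic binary `d`-form has only real roots: it is a product of
a nonzero real constant and `d` real linear forms. -/
theorem harmonic_has_only_real_roots
    (d : ℕ) (f : MvPolynomial (Fin 2) ℝ)
    (hf : f.IsHomogeneous d) (hf0 : f ≠ 0) (hharm : lap f = 0) :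
    ∃ (c : ℝ) (a b : Fin d → ℝ), c ≠ 0 ∧
      f = C c * ∏ i, (C (a i) * X 0 + C (b i) * X 1) := by
  rcases d.eq_zero_or_pos with rfl | hd
  · rw [← totalDegree_zero_iff_isHomogeneous, totalDegree_eq_zero_iff_eq_C] at hf
    exact ⟨coeff 0 f, 0, 0, fun h => hf0 (by rw [hf, h, C_0]), by simpa using hf⟩
  obtain ⟨A, hA⟩ := exists_map_eq_of_lap_eq_zero hd hf hharm
  obtain ⟨c, θ, hθ⟩ := Complex.exists_mul_add_conj_mul_eq_prod A hd
  have hmap : map (algebraMap ℝ ℂ) f = C c * map (algebraMap ℝ ℂ)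
      (∏ k, (C (-Real.sin (θ k)) * X 0 + C (Real.cos (θ k)) * X 1)) := by
    rw [hA]
    refine MvPolynomial.funext fun z => ?_
    simpa [sub_eq_add_neg] using hθ (z 0) (z 1)
  obtain ⟨r, hr, hfr⟩ := exists_eq_C_mul_of_map_eq_C_mul hf0 hmap
  exact ⟨r, _, _, hr, hfr⟩
end
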